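/- The exponential generating function for labelled tangles satisfies T_lbl(x,y) = e^{−x} + e^{−y} − 1 − B_lbl(x,y)⁻¹ in ℚ⟦x,y⟧, where T_lbl(x,y) = Σ_{i,j ≥ 0} t(i,j) x^i y^j/(i! j!), B_lbl(x,y) = Σ_{i,j ≥ 0} 2^{ij} x^i y^j/(i! j!), e^{−x} = Σ_{i ≥ 0} (−1)^i x^i/i!, and e^{−y} = Σ_{j ≥ 0} (−1)^j y^j/j!. -/

import Mathlib

/-- The neighbourhood of a top vertex `a` in the bicoloured graph `E`. -/
def topNbr {i j : ℕ} (E : Set (Fin i × Fin j)) (a : Fin i) : Set (Fin j) :=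
  {b | (a, b) ∈ E}

/-- The neighbourhood of a bottom vertex `b` in the bicoloured graph `E`. -/
def botNbr {i j : ℕ} (E : Set (Fin i × Fin j)) (b : Fin j) : Set (Fin i) :=
  {a | (a, b) ∈ E}

/-- Two sets are parallel (incomparable under inclusion). -/
def SetPar {α : Type*} (S T : Set α) : Prop := ¬ S ⊆ T ∧ ¬ T ⊆ S

/-- `a ⊤⊤ a'` for top vertices: their neighbourhoods are incomparable. -/
def TopRel {i j : ℕ} (E : Set (Fin i × Fin j)) (a a' : Fin i) : Prop :=
  SetPar (topNbr E a) (topNbr E a')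

/-- `b ⊥⊥ b'` for bottom vertices: their neighbourhoods are incomparable. -/
def BotRel {i j : ℕ} (E : Set (Fin i × Fin j)) (b b' : Fin j) : Prop :=
  SetPar (botNbr E b) (botNbr E b')

/-- A bicoloured graph with top vertex set `Fin i` and bottom vertex set `Fin j`
is a tangle if `i, j ≥ 2`, any two top vertices are connected under `⊤⊤` and any
two bottom vertices are connected under `⊥⊥`. -/
def IsTangle {i j : ℕ} (E : Set (Fin i × Fin j)) : Prop :=
  2 ≤ i ∧ 2 ≤ j ∧
    (∀ a a' : Fin i, Relation.ReflTransGen (TopRel E) a a') ∧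
    (∀ b b' : Fin j, Relation.ReflTransGen (BotRel E) b b')

/-- The number of tangles with top vertex set `Fin i` and bottom vertex set
`Fin j`. -/
noncomputable def tangleCount (i j : ℕ) : ℕ :=
  Set.ncard {E : Set (Fin i × Fin j) | IsTangle E}

/-- The two-variable exponential generating function for labelled tangles. -/
noncomputable def TlblGF : MvPowerSeries (Fin 2) ℚ :=
  fun e => (tangleCount (e 0) (e 1) : ℚ) / ((e 0).factorial * (e 1).factorial)

/-- The two-variable exponential generating function for labelled bicoloured
graphs, `B(x, y) = Σ 2^{ij} xⁱ yʲ/(i! j!)`. -/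
noncomputable def BlblGF : MvPowerSeries (Fin 2) ℚ :=
  fun e => (2 ^ (e 0 * e 1) : ℚ) / ((e 0).factorial * (e 1).factorial)

/-- The power series `e^{-x}` in the first variable. -/
noncomputable def expNegX : MvPowerSeries (Fin 2) ℚ :=
  fun e => if e 1 = 0 then (-1) ^ (e 0) * ((e 0).factorial : ℚ)⁻¹ else 0

/-- The power series `e^{-y}` in the second variable. -/
noncomputable def expNegY : MvPowerSeries (Fin 2) ℚ :=
  fun e => if e 0 = 0 then (-1) ^ (e 1) * ((e 1).factorial : ℚ)⁻¹ else 0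

/-!
Call `E ⊆ α × β` good if no top vertex is adjacent to every bottom vertex and no bottom vertex is
isolated. A good graph with a vertex has exactly one block `(P, Q)`: `E` is a tangle on `P × Q`,
complete on `P × Qᶜ`, empty on `Pᶜ × Q` and arbitrary on `Pᶜ × Qᶜ`. Here `P` is the `⊤⊤`-class of
a top vertex with maximal neighbourhood, and `Q` the set of bottom vertices not adjacent to all of
`P`. So the good graphs on `Fin i × Fin j` number `∑ C(i,p) C(j,q) t(p,q) 2^{(i-p)(j-q)}`, and
inclusion–exclusion counts them as `(2^j - 1)^i + (2^i - 1)^j - 2^{ij}` when `(i, j) ≠ (0, 0)`.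
Since `e^{-x} B` has coefficients `(2^j - 1)^i / (i! j!)` by the binomial theorem, this says
`T B = e^{-x} B + e^{-y} B - B - 1`.
-/

theorem Nat.card_set (γ : Type*) [Finite γ] : Nat.card (Set γ) = 2 ^ Nat.card γ := by
  rw [Set, Nat.card_fun, Nat.card_eq_fintype_card (α := Prop), Fintype.card_prop]

theorem Nat.card_subtype_ne {γ : Type*} [Finite γ] (c : γ) :
    Nat.card {x : γ // x ≠ c} = Nat.card γ - 1 := by
  classical
  have := Fintype.ofFinite γ
  simp only [Nat.card_eq_fintype_card, ne_eq, Fintype.card_subtype_compl, Fintype.card_unique]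

open Relation

section IncompLinked

variable {γ σ : Type*} [Preorder σ] {f : γ → σ} {x y z : γ}

/-- For a neighbourhood map `f` this is the reflexive transitive closure of `⊤⊤` (or `⊥⊥`). -/
def IncompLinked (f : γ → σ) : γ → γ → Prop :=
  ReflTransGen fun x y => IncompRel (· ≤ ·) (f x) (f y)

theorem IncompLinked.symm (h : IncompLinked f x y) : IncompLinked f y x := by
  have : Std.Symm fun x y => IncompRel (· ≤ ·) (f x) (f y) := ⟨fun _ _ h => h.symm⟩
  exact Std.Symm.symm (r := ReflTransGen _) _ _ h

theorem IncompLinked.trans (hxy : IncompLinked f x y) (hyz : IncompLinked f y z) :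
    IncompLinked f x z :=
  ReflTransGen.trans hxy hyz

theorem IncompLinked.exists_incompRel (h : IncompLinked f x y) (hne : x ≠ y) :
    ∃ z, IncompRel (· ≤ ·) (f x) (f z) := by
  obtain rfl | ⟨z, hz, -⟩ := ReflTransGen.cases_head h
  · exact absurd rfl hne
  · exact ⟨z, hz⟩

/-- `y` is comparable to every member of the class of `x`, and the direction of the comparison
cannot flip along an incomparable pair. -/
theorem IncompLinked.le_of_not_incompLinked (hxz : IncompLinked f x z)
    (hxy : ¬ IncompLinked f x y) (hyx : f y ≤ f x) : f y ≤ f z := by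
  induction hxz with
  | refl => exact hyx
  | @tail w z hxw hwz ih =>
    by_contra hyz
    have hzy : f z ≤ f y := by
      by_contra hzy
      exact hxy ((ReflTransGen.tail hxw hwz).tail ⟨hzy, hyz⟩)
    exact hwz.2 (hzy.trans ih)

theorem exists_incompLinked_dominating {D : Set γ} (hD : D.Finite) (hne : D.Nonempty) :
    ∃ x₀ ∈ D, ∀ y ∈ D, ¬ IncompLinked f x₀ y → ∀ z, IncompLinked f x₀ z → f y ≤ f z := by
  obtain ⟨x₀, hx₀, hmax⟩ := hD.exists_maximalFor f D hne
  refine ⟨x₀, hx₀, fun y hy hx₀y z hx₀z => hx₀z.le_of_not_incompLinked hx₀y ?_⟩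
  by_contra hyx₀
  have hx₀y' : f x₀ ≤ f y := by
    by_contra h
    exact hx₀y (ReflTransGen.single ⟨h, hyx₀⟩)
  exact hyx₀ (hmax hy hx₀y')

end IncompLinked

theorem Relation.ReflTransGen.mem_of_closed {γ : Type*} {r : γ → γ → Prop} {S : Set γ}
    (hS : ∀ x ∈ S, ∀ y, r x y → y ∈ S) {x y : γ} (h : ReflTransGen r x y) (hx : x ∈ S) :
    y ∈ S := by
  induction h with
  | refl => exact hx
  | tail _ hyz ih => exact hS _ ih _ hyz

theorem Relation.ReflTransGen.subtype_of_closed {γ : Type*} {r : γ → γ → Prop} {S : Set γ}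
    (hS : ∀ x ∈ S, ∀ y, r x y → y ∈ S) {x y : S} (h : ReflTransGen r x y) :
    ReflTransGen (fun u v : S => r u v) x y := by
  suffices ∀ z (hxz : ReflTransGen r x z) (hz : z ∈ S),
      ReflTransGen (fun u v : S => r u v) x ⟨z, hz⟩ from this y h y.2
  intro z hxz
  induction hxz with
  | refl => exact fun _ => ReflTransGen.refl
  | @tail w z hxw hwz ih =>
    have hw : w ∈ S := hxw.mem_of_closed hS x.2
    exact fun hz => ReflTransGen.tail (ih hw) (show r w z from hwz)

namespace Bicoloured

open Set

variable {α β γ δ : Type*}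

def topNbhd (E : Set (α × β)) (a : α) : Set β := {b | (a, b) ∈ E}

def botNbhd (E : Set (α × β)) (b : β) : Set α := {a | (a, b) ∈ E}

def IsTangled (E : Set (α × β)) : Prop :=
  2 ≤ Nat.card α ∧ 2 ≤ Nat.card β ∧
    (∀ a a', IncompLinked (topNbhd E) a a') ∧ (∀ b b', IncompLinked (botNbhd E) b b')

theorem isTangled_iff_isTangle {i j : ℕ} (E : Set (Fin i × Fin j)) :
    IsTangled E ↔ IsTangle E := by
  simp only [IsTangled, IsTangle, Nat.card_eq_fintype_card, Fintype.card_fin]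
  rfl

theorem incompLinked_iff_of_equiv {σ τ : Type*} [Preorder σ] [Preorder τ] {f : γ → σ}
    {g : δ → τ} (e : γ ≃ δ) (hfg : ∀ x y, f x ≤ f y ↔ g (e x) ≤ g (e y)) (x y : γ) :
    IncompLinked f x y ↔ IncompLinked g (e x) (e y) := by
  have hrel : ∀ x y, IncompRel (· ≤ ·) (f x) (f y) ↔ IncompRel (· ≤ ·) (g (e x)) (g (e y)) :=
    fun x y => by simp only [IncompRel, hfg]
  unfold IncompLinked
  constructor
  · exact ReflTransGen.lift (p := fun u v => IncompRel (· ≤ ·) (g u) (g v)) e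
      (fun x y h => (hrel x y).1 h) x y
  · intro h
    simpa [Function.onFun] using
      ReflTransGen.lift (p := fun u v => IncompRel (· ≤ ·) (f u) (f v)) e.symm
        (fun u v h => (hrel _ _).2 (by simpa using h)) _ _ h

theorem isTangled_preimage_prodMap (e : α ≃ γ) (e' : β ≃ δ) (E : Set (γ × δ)) :
    IsTangled (Prod.map e e' ⁻¹' E) ↔ IsTangled E := by
  have htop (a a' : α) : IncompLinked (topNbhd (Prod.map e e' ⁻¹' E)) a a' ↔
      IncompLinked (topNbhd E) (e a) (e a') :=
    incompLinked_iff_of_equiv (f := topNbhd (Prod.map e e' ⁻¹' E)) (g := topNbhd E) e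
      (fun x y => e'.surjective.preimage_subset_preimage_iff (s := topNbhd E (e x))
        (t := topNbhd E (e y))) a a'
  have hbot (b b' : β) : IncompLinked (botNbhd (Prod.map e e' ⁻¹' E)) b b' ↔
      IncompLinked (botNbhd E) (e' b) (e' b') :=
    incompLinked_iff_of_equiv (f := botNbhd (Prod.map e e' ⁻¹' E)) (g := botNbhd E) e'
      (fun x y => e.surjective.preimage_subset_preimage_iff (s := botNbhd E (e' x))
        (t := botNbhd E (e' y))) b b'
  simp only [IsTangled, htop, hbot, e.forall_congr_left, e'.forall_congr_left,
    Equiv.apply_symm_apply, Nat.card_congr e, Nat.card_congr e']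

theorem card_isTangled [Finite α] [Finite β] :
    Nat.card {E : Set (α × β) // IsTangled E} = tangleCount (Nat.card α) (Nat.card β) := by
  let e := Equiv.prodCongr (Finite.equivFin α) (Finite.equivFin β)
  rw [tangleCount, ← Nat.card_coe_set_eq]
  refine Nat.card_congr (Equiv.subtypeEquiv (Equiv.Set.congr e) fun E => ?_)
  rw [mem_ofPred_eq, ← isTangled_iff_isTangle, Equiv.Set.congr_apply,
    e.image_eq_preimage_symm]
  exact (isTangled_preimage_prodMap _ _ E).symm

theorem IsTangled.nontrivial_left {E : Set (α × β)} (h : IsTangled E) : Nontrivial α :=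
  have : Finite α := Nat.finite_of_card_ne_zero (by have := h.1; omega)
  Finite.one_lt_card_iff_nontrivial.1 h.1

theorem IsTangled.nontrivial_right {E : Set (α × β)} (h : IsTangled E) : Nontrivial β :=
  have : Finite β := Nat.finite_of_card_ne_zero (by have := h.2.1; omega)
  Finite.one_lt_card_iff_nontrivial.1 h.2.1

def NoFullTop (E : Set (α × β)) : Prop := ∀ a, topNbhd E a ≠ univ

def NoIsolatedBot (E : Set (α × β)) : Prop := ∀ b, botNbhd E b ≠ ∅

def restrict (E : Set (α × β)) (P : Set α) (Q : Set β) : Set (P × Q) :=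
  Prod.map (↑) (↑) ⁻¹' E

structure IsBlock (E : Set (α × β)) (P : Set α) (Q : Set β) : Prop where
  prod_compl_subset : P ×ˢ Qᶜ ⊆ E
  disjoint_compl_prod : Disjoint (Pᶜ ×ˢ Q) E
  isTangled_restrict : IsTangled (restrict E P Q)

section Block

variable {E : Set (α × β)} {P : Set α} {Q : Set β}

theorem topNbhd_subset_topNbhd_of_notMem (hfull : P ×ˢ Qᶜ ⊆ E)
    (hempty : Disjoint (Pᶜ ×ˢ Q) E) {x y : α} (hx : x ∈ P) (hy : y ∉ P) :
    topNbhd E y ⊆ topNbhd E x := by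
  intro b hb
  by_cases hbQ : b ∈ Q
  · exact absurd hb (disjoint_left.1 hempty ⟨hy, hbQ⟩)
  · exact hfull ⟨hx, hbQ⟩

theorem botNbhd_subset_of_mem (hempty : Disjoint (Pᶜ ×ˢ Q) E) {b : β} (hb : b ∈ Q) :
    botNbhd E b ⊆ P :=
  fun a ha => by_contra fun haP =>
    disjoint_left.1 hempty (show (a, b) ∈ Pᶜ ×ˢ Q from ⟨haP, hb⟩) ha

theorem subset_botNbhd_of_notMem (hfull : P ×ˢ Qᶜ ⊆ E) {b : β} (hb : b ∉ Q) :
    P ⊆ botNbhd E b :=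
  fun _ ha => hfull ⟨ha, hb⟩

theorem incompRel_topNbhd_restrict_iff (hfull : P ×ˢ Qᶜ ⊆ E) (x y : P) :
    IncompRel (· ≤ ·) (topNbhd (restrict E P Q) x) (topNbhd (restrict E P Q) y) ↔
      IncompRel (· ≤ ·) (topNbhd E x) (topNbhd E y) := by
  have hQ (z : P) (S : Set β) : (Subtype.val ⁻¹' S : Set Q) ⊆ Subtype.val ⁻¹' topNbhd E z ↔
      S ⊆ topNbhd E z := by
    rw [Subtype.preimage_val_subset_preimage_val_iff]
    refine ⟨fun h b hb => ?_, fun h => inter_subset_inter_right Q h⟩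
    by_cases hbQ : b ∈ Q
    · exact (h ⟨hbQ, hb⟩).2
    · exact hfull ⟨z.2, hbQ⟩
  exact and_congr (not_congr (hQ y (topNbhd E x))) (not_congr (hQ x (topNbhd E y)))

theorem incompRel_botNbhd_restrict_iff (hempty : Disjoint (Pᶜ ×ˢ Q) E) (x y : Q) :
    IncompRel (· ≤ ·) (botNbhd (restrict E P Q) x) (botNbhd (restrict E P Q) y) ↔
      IncompRel (· ≤ ·) (botNbhd E x) (botNbhd E y) := by
  have hP (z : Q) (S : Set α) : (Subtype.val ⁻¹' botNbhd E z : Set P) ⊆ Subtype.val ⁻¹' S ↔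
      botNbhd E z ⊆ S := by
    rw [Subtype.preimage_val_subset_preimage_val_iff,
      inter_eq_right.2 (botNbhd_subset_of_mem hempty z.2), subset_inter_iff]
    exact and_iff_right (botNbhd_subset_of_mem hempty z.2)
  exact and_congr (not_congr (hP x (botNbhd E y))) (not_congr (hP y (botNbhd E x)))

theorem isBlock_of_incompLinked [Finite α] [Finite β] (hfull : P ×ˢ Qᶜ ⊆ E)
    (hempty : Disjoint (Pᶜ ×ˢ Q) E) (hP : P.Nontrivial) (hQ : Q.Nontrivial)
    (htop : ∀ a ∈ P, ∀ a' ∈ P, IncompLinked (topNbhd E) a a')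
    (hbot : ∀ b ∈ Q, ∀ b' ∈ Q, IncompLinked (botNbhd E) b b') : IsBlock E P Q := by
  have hPclosed : ∀ a ∈ P, ∀ a', IncompRel (· ≤ ·) (topNbhd E a) (topNbhd E a') → a' ∈ P :=
    fun a ha a' h => by_contra fun ha' =>
      h.2 (topNbhd_subset_topNbhd_of_notMem hfull hempty ha ha')
  have hQclosed : ∀ b ∈ Q, ∀ b', IncompRel (· ≤ ·) (botNbhd E b) (botNbhd E b') → b' ∈ Q :=
    fun b hb b' h => by_contra fun hb' =>
      h.1 ((botNbhd_subset_of_mem hempty hb).trans (subset_botNbhd_of_notMem hfull hb'))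
  refine ⟨hfull, hempty, Finite.one_lt_card_iff_nontrivial.2 (nontrivial_coe_sort.2 hP),
    Finite.one_lt_card_iff_nontrivial.2 (nontrivial_coe_sort.2 hQ), fun x y => ?_, fun x y => ?_⟩
  · exact ReflTransGen.mono (fun u v h => (incompRel_topNbhd_restrict_iff hfull u v).2 h) x y
      (ReflTransGen.subtype_of_closed hPclosed (htop x x.2 y y.2))
  · exact ReflTransGen.mono (fun u v h => (incompRel_botNbhd_restrict_iff hempty u v).2 h) x y
      (ReflTransGen.subtype_of_closed hQclosed (hbot x x.2 y y.2))

theorem IsBlock.nontrivial_left (h : IsBlock E P Q) : P.Nontrivial :=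
  nontrivial_coe_sort.1 h.isTangled_restrict.nontrivial_left

theorem IsBlock.nontrivial_right (h : IsBlock E P Q) : Q.Nontrivial :=
  nontrivial_coe_sort.1 h.isTangled_restrict.nontrivial_right

theorem IsBlock.incompLinked_topNbhd (h : IsBlock E P Q) {a a' : α} (ha : a ∈ P)
    (ha' : a' ∈ P) : IncompLinked (topNbhd E) a a' :=
  ReflTransGen.lift Subtype.val
    (fun u v huv => (incompRel_topNbhd_restrict_iff h.prod_compl_subset u v).1 huv)
    ⟨a, ha⟩ ⟨a', ha'⟩ (h.isTangled_restrict.2.2.1 _ _)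

theorem IsBlock.exists_incompRel_topNbhd (h : IsBlock E P Q) {a : α} (ha : a ∈ P) :
    ∃ a' ∈ P, IncompRel (· ≤ ·) (topNbhd E a) (topNbhd E a') := by
  have := h.isTangled_restrict.nontrivial_left
  obtain ⟨a', ha'⟩ := exists_ne (⟨a, ha⟩ : P)
  obtain ⟨w, hw⟩ := (h.isTangled_restrict.2.2.1 ⟨a, ha⟩ a').exists_incompRel ha'.symm
  exact ⟨w, w.2, (incompRel_topNbhd_restrict_iff h.prod_compl_subset _ w).1 hw⟩

theorem IsBlock.exists_incompRel_botNbhd (h : IsBlock E P Q) {b : β} (hb : b ∈ Q) :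
    ∃ b' ∈ Q, IncompRel (· ≤ ·) (botNbhd E b) (botNbhd E b') := by
  have := h.isTangled_restrict.nontrivial_right
  obtain ⟨b', hb'⟩ := exists_ne (⟨b, hb⟩ : Q)
  obtain ⟨w, hw⟩ := (h.isTangled_restrict.2.2.2 ⟨b, hb⟩ b').exists_incompRel hb'.symm
  exact ⟨w, w.2, (incompRel_botNbhd_restrict_iff h.disjoint_compl_prod _ w).1 hw⟩

theorem IsBlock.noFullTop (h : IsBlock E P Q) : NoFullTop E := by
  intro a ha
  by_cases haP : a ∈ P
  · obtain ⟨a', -, haa'⟩ := h.exists_incompRel_topNbhd haP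
    exact haa'.2 (ha ▸ subset_univ _)
  · obtain ⟨b, hb⟩ := h.nontrivial_right.nonempty
    exact disjoint_left.1 h.disjoint_compl_prod (show (a, b) ∈ Pᶜ ×ˢ Q from ⟨haP, hb⟩)
      (show b ∈ topNbhd E a from ha ▸ mem_univ b)

theorem IsBlock.noIsolatedBot (h : IsBlock E P Q) : NoIsolatedBot E := by
  intro b hb
  by_cases hbQ : b ∈ Q
  · obtain ⟨b', -, hbb'⟩ := h.exists_incompRel_botNbhd hbQ
    exact hbb'.1 (hb ▸ empty_subset _)
  · obtain ⟨a, ha⟩ := h.nontrivial_left.nonempty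
    exact (hb ▸ subset_botNbhd_of_notMem h.prod_compl_subset hbQ ha : a ∈ (∅ : Set α))

theorem IsBlock.eq_setOf (h : IsBlock E P Q) : Q = {b | ¬ P ⊆ botNbhd E b} := by
  ext b
  refine ⟨fun hb hPb => ?_, fun hb => by_contra fun hbQ => hb ?_⟩
  · obtain ⟨b', hb', hbb'⟩ := h.exists_incompRel_botNbhd hb
    exact hbb'.2 ((botNbhd_subset_of_mem h.disjoint_compl_prod hb').trans hPb)
  · exact subset_botNbhd_of_notMem h.prod_compl_subset hbQ

theorem IsBlock.subset {P' : Set α} {Q' : Set β} (h : IsBlock E P Q) (h' : IsBlock E P' Q') :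
    P ⊆ P' := by
  intro a ha
  by_contra haP'
  have hdom {x y : α} (hx : x ∈ P') (hy : y ∉ P') : topNbhd E y ⊆ topNbhd E x :=
    topNbhd_subset_topNbhd_of_notMem h'.prod_compl_subset h'.disjoint_compl_prod hx hy
  obtain ⟨y, hyP'⟩ := h'.nontrivial_left.nonempty
  by_cases hyP : y ∈ P
  · have hclosed : ∀ x ∈ P'ᶜ, ∀ z, IncompRel (· ≤ ·) (topNbhd E x) (topNbhd E z) → z ∈ P'ᶜ :=
      fun x hx z hxz hz => hxz.1 (hdom hz hx)
    exact ReflTransGen.mem_of_closed hclosed (h.incompLinked_topNbhd ha hyP) haP' hyP'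
  · obtain ⟨w, hw, haw⟩ := h.exists_incompRel_topNbhd ha
    exact haw.1 ((hdom hyP' haP').trans
      (topNbhd_subset_topNbhd_of_notMem h.prod_compl_subset h.disjoint_compl_prod hw hyP))

theorem IsBlock.unique {P' : Set α} {Q' : Set β} (h : IsBlock E P Q) (h' : IsBlock E P' Q') :
    P = P' ∧ Q = Q' := by
  have hP : P = P' := (h.subset h').antisymm (h'.subset h)
  exact ⟨hP, by rw [h.eq_setOf, h'.eq_setOf, hP]⟩

/-- Let `K` be the class of some `b₀ ∈ Q` with maximal neighbourhood. A `b ∈ Q` outside `K` would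
make the common neighbours `T ⊆ P` of `K` a nonempty proper subset of `P` that no `⊤⊤`-pair
leaves. -/
theorem incompLinked_botNbhd_of_incompLinked_topNbhd [Finite β] (hfull : P ×ˢ Qᶜ ⊆ E)
    (hempty : Disjoint (Pᶜ ×ˢ Q) E) (hM : NoIsolatedBot E)
    (hQ : ∀ b ∈ Q, ¬ P ⊆ botNbhd E b)
    (hP : ∀ a ∈ P, ∀ a' ∈ P, IncompLinked (topNbhd E) a a') :
    ∀ b ∈ Q, ∀ b' ∈ Q, IncompLinked (botNbhd E) b b' := by
  rcases Q.eq_empty_or_nonempty with rfl | hQne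
  · simp
  obtain ⟨b₀, hb₀, hdom⟩ := exists_incompLinked_dominating (f := botNbhd E) Q.toFinite hQne
  suffices H : ∀ b ∈ Q, IncompLinked (botNbhd E) b₀ b from
    fun b hb b' hb' => (H b hb).symm.trans (H b' hb')
  intro b hb
  by_contra hb₀b
  set T : Set α := {a | ∀ z, IncompLinked (botNbhd E) b₀ z → a ∈ botNbhd E z}
  have hT_lower {c : β} (hc : c ∈ Q) (hb₀c : ¬ IncompLinked (botNbhd E) b₀ c) :
      botNbhd E c ⊆ T :=
    fun _ ha z hz => hdom c hc hb₀c z hz ha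
  have hTP : T ⊆ P := fun _ ha => botNbhd_subset_of_mem hempty hb₀ (ha b₀ .refl)
  obtain ⟨a₁, ha₁⟩ : T.Nonempty := (nonempty_iff_ne_empty.2 (hM b)).mono (hT_lower hb hb₀b)
  obtain ⟨a₂, ha₂P, ha₂b₀⟩ := not_subset.1 (hQ b₀ hb₀)
  have hclosed : ∀ x ∈ T, ∀ y, IncompRel (· ≤ ·) (topNbhd E x) (topNbhd E y) → y ∈ T := by
    intro x hx y hxy
    by_contra hy
    refine hxy.2 fun c hc => ?_
    by_cases hcQ : c ∈ Q
    · by_cases hb₀c : IncompLinked (botNbhd E) b₀ c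
      · exact hx c hb₀c
      · exact absurd (hT_lower hcQ hb₀c hc) hy
    · exact subset_botNbhd_of_notMem hfull hcQ (hTP hx)
  exact ha₂b₀ (ReflTransGen.mem_of_closed hclosed (hP a₁ (hTP ha₁) a₂ ha₂P) ha₁ b₀ .refl)

theorem isBlock_of_dominating [Finite α] [Finite β] (hN : NoFullTop E) (hM : NoIsolatedBot E)
    (hPne : P.Nonempty) (hdom : ∀ x ∈ P, ∀ y ∉ P, topNbhd E y ⊆ topNbhd E x)
    (hP : ∀ a ∈ P, ∀ a' ∈ P, IncompLinked (topNbhd E) a a') :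
    IsBlock E P {b | ¬ P ⊆ botNbhd E b} := by
  set Q := {b | ¬ P ⊆ botNbhd E b}
  have hQP {b : β} (hb : b ∈ Q) : botNbhd E b ⊆ P := by
    intro x hx
    by_contra hxP
    obtain ⟨a, ha, hab⟩ := not_subset.1 hb
    exact hab (hdom a ha x hxP hx)
  have hfull : P ×ˢ Qᶜ ⊆ E := fun _ hab => not_not.1 hab.2 hab.1
  have hempty : Disjoint (Pᶜ ×ˢ Q) E := disjoint_left.2 fun _ hab hE => hab.1 (hQP hab.2 hE)
  have hmiss {a : α} (ha : a ∈ P) : ∃ b ∈ Q, (a, b) ∉ E := by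
    obtain ⟨b, hb⟩ := (ne_univ_iff_exists_notMem _).1 (hN a)
    exact ⟨b, fun hPb => hb (hPb ha), hb⟩
  -- some `b ∈ Q` has a neighbour `x` and a non-neighbour `a` in `P`; `x` misses some `b' ∈ Q`
  obtain ⟨a₀, ha₀⟩ := hPne
  obtain ⟨b, hb, -⟩ := hmiss ha₀
  obtain ⟨x, hx⟩ := nonempty_iff_ne_empty.2 (hM b)
  obtain ⟨a, ha, hab⟩ := not_subset.1 hb
  obtain ⟨b', hb', hxb'⟩ := hmiss (hQP hb hx)
  refine isBlock_of_incompLinked hfull hempty ⟨x, hQP hb hx, a, ha, fun h => hab (h ▸ hx)⟩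
    ⟨b, hb, b', hb', fun h => hxb' (h ▸ hx)⟩ hP ?_
  exact incompLinked_botNbhd_of_incompLinked_topNbhd hfull hempty hM (fun _ hb => hb) hP

theorem exists_isBlock [Finite α] [Finite β] [Nonempty α] (hN : NoFullTop E)
    (hM : NoIsolatedBot E) : ∃ P Q, IsBlock E P Q := by
  obtain ⟨a₀, -, hdom⟩ :=
    exists_incompLinked_dominating (f := topNbhd E) finite_univ univ_nonempty
  exact ⟨_, _, isBlock_of_dominating hN hM ⟨a₀, .refl⟩
    (fun x hx y hy => hdom y trivial hy x hx)
    (fun a ha a' ha' => (IncompLinked.symm ha).trans ha')⟩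

end Block

section Counting

variable {P : Set α} {Q : Set β}

def glue (P : Set α) (Q : Set β) (T : Set (P × Q)) (F : Set (↥Pᶜ × ↥Qᶜ)) : Set (α × β) :=
  P ×ˢ Qᶜ ∪ Prod.map (↑) (↑) '' T ∪ Prod.map (↑) (↑) '' F

theorem restrict_glue (T : Set (P × Q)) (F : Set (↥Pᶜ × ↥Qᶜ)) :
    restrict (glue P Q T F) P Q = T := by
  ext ⟨⟨a, ha⟩, ⟨b, hb⟩⟩
  simp [restrict, glue, ha, hb]

theorem restrict_compl_glue (T : Set (P × Q)) (F : Set (↥Pᶜ × ↥Qᶜ)) :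
    restrict (glue P Q T F) Pᶜ Qᶜ = F := by
  ext ⟨⟨a, ha⟩, ⟨b, hb⟩⟩
  rw [mem_compl_iff] at ha hb
  simp [restrict, glue, ha, hb]

theorem isBlock_glue {T : Set (P × Q)} (hT : IsTangled T) (F : Set (↥Pᶜ × ↥Qᶜ)) :
    IsBlock (glue P Q T F) P Q := by
  refine ⟨fun x hx => Or.inl (Or.inl hx), disjoint_left.2 ?_, (restrict_glue T F).symm ▸ hT⟩
  rintro ⟨a, b⟩ ⟨ha, hb⟩
  simp_all [glue]

theorem IsBlock.glue_restrict {E : Set (α × β)} (h : IsBlock E P Q) :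
    glue P Q (restrict E P Q) (restrict E Pᶜ Qᶜ) = E := by
  ext ⟨a, b⟩
  have hfull (hab : (a, b) ∈ P ×ˢ Qᶜ) : (a, b) ∈ E := h.prod_compl_subset hab
  have hempty (hab : (a, b) ∈ Pᶜ ×ˢ Q) : (a, b) ∉ E := disjoint_left.1 h.disjoint_compl_prod hab
  by_cases ha : a ∈ P <;> by_cases hb : b ∈ Q <;> simp_all [glue, restrict]

def isBlockEquiv (P : Set α) (Q : Set β) :
    {E : Set (α × β) // IsBlock E P Q} ≃ {T : Set (P × Q) // IsTangled T} × Set (↥Pᶜ × ↥Qᶜ) where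
  toFun E := (⟨restrict E P Q, E.2.isTangled_restrict⟩, restrict E Pᶜ Qᶜ)
  invFun TF := ⟨glue P Q TF.1 TF.2, isBlock_glue TF.1.2 TF.2⟩
  left_inv E := Subtype.ext E.2.glue_restrict
  right_inv _ := Prod.ext (Subtype.ext (restrict_glue _ _)) (restrict_compl_glue _ _)

theorem card_isBlock [Finite α] [Finite β] (P : Set α) (Q : Set β) :
    Nat.card {E : Set (α × β) // IsBlock E P Q} =
      tangleCount P.ncard Q.ncard * 2 ^ (Pᶜ.ncard * Qᶜ.ncard) := by
  rw [Nat.card_congr (isBlockEquiv P Q), Nat.card_prod, card_isTangled, Nat.card_set,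
    Nat.card_prod]
  simp only [Nat.card_coe_set_eq]

theorem card_noFullTop_noIsolatedBot_eq_card_sigma [Finite α] [Finite β]
    (hne : Nonempty α ∨ Nonempty β) :
    Nat.card {E : Set (α × β) // NoFullTop E ∧ NoIsolatedBot E} =
      Nat.card (Σ PQ : Set α × Set β, {E : Set (α × β) // IsBlock E PQ.1 PQ.2}) := by
  refine (Nat.card_congr (Equiv.ofBijective
    (fun x => ⟨x.2.1, x.2.2.noFullTop, x.2.2.noIsolatedBot⟩) ⟨?_, ?_⟩)).symm
  · rintro ⟨⟨P, Q⟩, E, h⟩ ⟨⟨P', Q'⟩, E', h'⟩ hEE'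
    obtain rfl : E = E' := congrArg Subtype.val hEE'
    obtain ⟨rfl, rfl⟩ := h.unique h'
    rfl
  · rintro ⟨E, hN, hM⟩
    have : Nonempty α :=
      hne.elim id fun ⟨b⟩ => (nonempty_iff_ne_empty.2 (hM b)).to_subtype.map Subtype.val
    obtain ⟨P, Q, h⟩ := exists_isBlock hN hM
    exact ⟨⟨(P, Q), E, h⟩, rfl⟩

theorem noFullTop_or_noIsolatedBot (E : Set (α × β)) : NoFullTop E ∨ NoIsolatedBot E := by
  refine or_iff_not_imp_left.2 fun hN b hb => ?_
  obtain ⟨a, ha⟩ : ∃ a, topNbhd E a = univ := by simpa [NoFullTop] using hN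
  have : a ∈ botNbhd E b := show b ∈ topNbhd E a from ha ▸ mem_univ b
  exact (hb ▸ this : a ∈ (∅ : Set α))

theorem card_forall_topNbhd_ne [Finite α] [Finite β] (S : Set β) :
    Nat.card {E : Set (α × β) // ∀ a, topNbhd E a ≠ S} = (2 ^ Nat.card β - 1) ^ Nat.card α := by
  let e : {E : Set (α × β) // ∀ a, topNbhd E a ≠ S} ≃ (α → {T : Set β // T ≠ S}) :=
    (Equiv.subtypeEquiv (p := fun E : Set (α × β) => ∀ a, topNbhd E a ≠ S)
      (q := fun f : α → Set β => ∀ a, f a ≠ S) (Equiv.curry α β Prop) fun _ => Iff.rfl).trans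
      (Equiv.subtypePiEquivPi (p := fun (_ : α) (T : Set β) => T ≠ S))
  rw [Nat.card_congr e, Nat.card_fun, Nat.card_subtype_ne, Nat.card_set]

theorem card_noFullTop [Finite α] [Finite β] :
    Nat.card {E : Set (α × β) // NoFullTop E} = (2 ^ Nat.card β - 1) ^ Nat.card α :=
  card_forall_topNbhd_ne univ

theorem card_noIsolatedBot [Finite α] [Finite β] :
    Nat.card {E : Set (α × β) // NoIsolatedBot E} = (2 ^ Nat.card α - 1) ^ Nat.card β := by
  rw [← card_forall_topNbhd_ne ∅]
  refine Nat.card_congr (Equiv.subtypeEquiv (Equiv.Set.congr (Equiv.prodComm α β)) fun E => ?_)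
  rw [Equiv.Set.congr_apply, Equiv.image_eq_preimage_symm]
  rfl

theorem card_noFullTop_noIsolatedBot_add_two_pow [Finite α] [Finite β] :
    Nat.card {E : Set (α × β) // NoFullTop E ∧ NoIsolatedBot E} + 2 ^ (Nat.card α * Nat.card β) =
      (2 ^ Nat.card β - 1) ^ Nat.card α + (2 ^ Nat.card α - 1) ^ Nat.card β := by
  have h := ncard_union_add_ncard_inter {E : Set (α × β) | NoFullTop E} {E | NoIsolatedBot E}
  rw [show {E | NoFullTop E} ∪ {E | NoIsolatedBot E} = univ from
      eq_univ_of_forall noFullTop_or_noIsolatedBot, ncard_univ, Nat.card_set, Nat.card_prod] at h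
  rw [← card_noFullTop, ← card_noIsolatedBot]
  simp only [← Nat.card_coe_set_eq] at h
  rw [add_comm]
  exact h

end Counting

end Bicoloured

open Finset

theorem sum_set_eq_sum_antidiagonal {M γ : Type*} [AddCommMonoid M] [Fintype γ]
    (h : ℕ → ℕ → M) :
    ∑ S : Set γ, h S.ncard Sᶜ.ncard =
      ∑ p ∈ antidiagonal (Fintype.card γ), (Fintype.card γ).choose p.1 • h p.1 p.2 := by
  classical
  calc ∑ S : Set γ, h S.ncard Sᶜ.ncard
      = ∑ s ∈ (univ : Finset γ).powerset, h #s (Fintype.card γ - #s) := by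
        rw [← Fintype.finsetEquivSet.sum_comp, powerset_univ]
        simp only [Fintype.finsetEquivSet_apply, ← coe_compl, Set.ncard_coe_finset, card_compl]
    _ = _ := by
        rw [sum_powerset_apply_card (fun k => h k (Fintype.card γ - k)), card_univ,
          Nat.sum_antidiagonal_eq_sum_range_succ_mk]

theorem sum_tangleCount_add_two_pow {i j : ℕ} (hij : i ≠ 0 ∨ j ≠ 0) :
    (∑ P : Set (Fin i), ∑ Q : Set (Fin j), tangleCount P.ncard Q.ncard * 2 ^ (Pᶜ.ncard * Qᶜ.ncard))
      + 2 ^ (i * j) = (2 ^ j - 1) ^ i + (2 ^ i - 1) ^ j := by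
  have hne : Nonempty (Fin i) ∨ Nonempty (Fin j) := by
    simpa only [← Fin.pos_iff_nonempty, Nat.pos_iff_ne_zero] using hij
  have h := Bicoloured.card_noFullTop_noIsolatedBot_add_two_pow (α := Fin i) (β := Fin j)
  rw [Bicoloured.card_noFullTop_noIsolatedBot_eq_card_sigma hne, Nat.card_sigma,
    Fintype.sum_prod_type] at h
  simpa only [Bicoloured.card_isBlock, Nat.card_eq_fintype_card, Fintype.card_fin] using h

theorem sum_antidiagonal_fin_two {M : Type*} [AddCommMonoid M] (n : Fin 2 →₀ ℕ)
    (F : (Fin 2 →₀ ℕ) → (Fin 2 →₀ ℕ) → M) :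
    ∑ p ∈ antidiagonal n, F p.1 p.2 =
      ∑ p ∈ antidiagonal (n 0), ∑ q ∈ antidiagonal (n 1),
        F (Finsupp.single 0 p.1 + Finsupp.single 1 q.1)
          (Finsupp.single 0 p.2 + Finsupp.single 1 q.2) := by
  have hpair (m : Fin 2 →₀ ℕ) : Finsupp.single 0 (m 0) + Finsupp.single 1 (m 1) = m := by
    ext k
    fin_cases k <;> simp
  rw [← sum_product']
  refine sum_nbij' (fun p => ((p.1 0, p.2 0), (p.1 1, p.2 1)))
    (fun x => (Finsupp.single 0 x.1.1 + Finsupp.single 1 x.2.1,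
      Finsupp.single 0 x.1.2 + Finsupp.single 1 x.2.2)) ?_ ?_ ?_ ?_ ?_
  · intro p hp
    rw [HasAntidiagonal.mem_antidiagonal] at hp
    subst hp
    simp
  · intro x hx
    simp only [HasAntidiagonal.mem_antidiagonal, mem_product] at hx ⊢
    ext k
    fin_cases k <;> simp [← hx.1, ← hx.2, add_add_add_comm]
  · intro p _
    simp [hpair]
  · intro x _
    simp
  · intro p _
    simp [hpair]

noncomputable def egf (f : ℕ → ℕ → ℚ) : MvPowerSeries (Fin 2) ℚ :=
  fun e => f (e 0) (e 1) / ((e 0).factorial * (e 1).factorial)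

def binomConv (f g : ℕ → ℕ → ℚ) (i j : ℕ) : ℚ :=
  ∑ p ∈ antidiagonal i, ∑ q ∈ antidiagonal j,
    (i.choose p.1 * j.choose q.1 : ℚ) * (f p.1 q.1 * g p.2 q.2)

theorem coeff_egf (f : ℕ → ℕ → ℚ) (n : Fin 2 →₀ ℕ) :
    MvPowerSeries.coeff n (egf f) = f (n 0) (n 1) / ((n 0).factorial * (n 1).factorial) :=
  rfl

theorem egf_mul (f g : ℕ → ℕ → ℚ) : egf f * egf g = egf (binomConv f g) := by
  ext n
  rw [MvPowerSeries.coeff_mul,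
    sum_antidiagonal_fin_two n fun a b =>
      MvPowerSeries.coeff a (egf f) * MvPowerSeries.coeff b (egf g),
    coeff_egf, binomConv, sum_div]
  refine sum_congr rfl fun p hp => ?_
  rw [sum_div]
  refine sum_congr rfl fun q hq => ?_
  rw [HasAntidiagonal.mem_antidiagonal] at hp hq
  simp only [coeff_egf, Finsupp.coe_add, Pi.add_apply, Finsupp.single_eq_same,
    Finsupp.single_eq_of_ne zero_ne_one, Finsupp.single_eq_of_ne one_ne_zero, add_zero, zero_add]
  rw [← hp, ← hq, Nat.cast_add_choose, Nat.cast_add_choose]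
  field_simp

theorem egf_add (f g : ℕ → ℕ → ℚ) : egf (f + g) = egf f + egf g := by
  ext n
  simp only [map_add, coeff_egf, Pi.add_apply, add_div]

theorem egf_sub (f g : ℕ → ℕ → ℚ) : egf (f - g) = egf f - egf g := by
  ext n
  simp only [map_sub, coeff_egf, Pi.sub_apply, sub_div]

theorem egf_ite_zero : egf (fun i j => if i = 0 ∧ j = 0 then 1 else 0) = 1 := by
  ext n
  have hn : n = 0 ↔ n 0 = 0 ∧ n 1 = 0 :=
    ⟨fun h => by simp [h], fun h => by ext k; fin_cases k <;> simp [h.1, h.2]⟩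
  rw [coeff_egf, MvPowerSeries.coeff_one]
  simp only [hn]
  split_ifs with h <;> simp [h]

theorem expNegX_eq_egf : expNegX = egf fun i j => if j = 0 then (-1) ^ i else 0 := by
  ext n
  rw [coeff_egf, MvPowerSeries.coeff_apply, expNegX]
  split_ifs with h <;> simp [h, div_eq_mul_inv]

theorem expNegY_eq_egf : expNegY = egf fun i j => if i = 0 then (-1) ^ j else 0 := by
  ext n
  rw [coeff_egf, MvPowerSeries.coeff_apply, expNegY]
  split_ifs with h <;> simp [h, div_eq_mul_inv]

theorem binomConv_swap (f g : ℕ → ℕ → ℚ) (i j : ℕ) :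
    binomConv (fun a b => f b a) (fun a b => g b a) i j = binomConv f g j i := by
  rw [binomConv, binomConv, sum_comm]
  simp only [mul_comm]

theorem binomConv_expNegX (i j : ℕ) :
    binomConv (fun a b => if b = 0 then (-1) ^ a else 0) (fun a b => 2 ^ (a * b)) i j =
      (2 ^ j - 1) ^ i := by
  rw [binomConv, sub_eq_neg_add, (Commute.all _ _).add_pow']
  refine sum_congr rfl fun p _ => ?_
  rw [sum_eq_single_of_mem (0, j) (by simp)]
  · simp [pow_mul']
  · rintro ⟨q, q'⟩ hq hq0
    have : q ≠ 0 := by rintro rfl; simp_all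
    simp [this]

theorem binomConv_expNegY (i j : ℕ) :
    binomConv (fun a b => if a = 0 then (-1) ^ b else 0) (fun a b => 2 ^ (a * b)) i j =
      (2 ^ i - 1) ^ j := by
  rw [← binomConv_expNegX j i, ← binomConv_swap]
  simp only [mul_comm]

theorem tangleCount_zero_left (j : ℕ) : tangleCount 0 j = 0 := by
  simp [tangleCount, IsTangle]

theorem binomConv_tangleCount (i j : ℕ) :
    binomConv (fun a b => tangleCount a b) (fun a b => 2 ^ (a * b)) i j =
      ((∑ P : Set (Fin i), ∑ Q : Set (Fin j),
        tangleCount P.ncard Q.ncard * 2 ^ (Pᶜ.ncard * Qᶜ.ncard) : ℕ) : ℚ) := by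
  have h (n : ℕ) (g : ℕ → ℕ → ℚ) : ∑ S : Set (Fin n), g S.ncard Sᶜ.ncard =
      ∑ p ∈ antidiagonal n, (n.choose p.1 : ℚ) * g p.1 p.2 := by
    simpa [nsmul_eq_mul] using sum_set_eq_sum_antidiagonal (γ := Fin n) g
  push_cast
  rw [h i fun a a' => ∑ Q : Set (Fin j), (tangleCount a Q.ncard : ℚ) * 2 ^ (a' * Qᶜ.ncard)]
  refine sum_congr rfl fun p _ => ?_
  rw [h j fun b b' => (tangleCount p.1 b : ℚ) * 2 ^ (p.2 * b'), mul_sum]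
  refine sum_congr rfl fun q _ => ?_
  ring

theorem binomConv_tangleCount_eq :
    binomConv (fun a b => tangleCount a b) (fun a b => 2 ^ (a * b)) =
      binomConv (fun a b => if b = 0 then (-1) ^ a else 0) (fun a b => 2 ^ (a * b)) +
        binomConv (fun a b => if a = 0 then (-1) ^ b else 0) (fun a b => 2 ^ (a * b)) -
        (fun a b => 2 ^ (a * b)) - fun a b => if a = 0 ∧ b = 0 then 1 else 0 := by
  ext i j
  simp only [Pi.add_apply, Pi.sub_apply, binomConv_expNegX, binomConv_expNegY]
  by_cases hij : i = 0 ∧ j = 0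
  · obtain ⟨rfl, rfl⟩ := hij
    simp [binomConv, tangleCount_zero_left]
  · have h := congrArg (Nat.cast (R := ℚ)) (sum_tangleCount_add_two_pow (not_and_or.1 hij))
    rw [binomConv_tangleCount, if_neg hij]
    push_cast [Nat.one_le_two_pow] at h ⊢
    linarith

theorem tlblGF_mul_blblGF : TlblGF * BlblGF = (expNegX + expNegY - 1) * BlblGF - 1 := by
  have hT : TlblGF = egf fun i j => (tangleCount i j : ℚ) := rfl
  have hB : BlblGF = egf fun i j => 2 ^ (i * j) := rfl
  rw [hT, hB, egf_mul, binomConv_tangleCount_eq, egf_sub, egf_sub, egf_add, ← egf_mul, ← egf_mul,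
    ← expNegX_eq_egf, ← expNegY_eq_egf, egf_ite_zero]
  ring

theorem labelled_tangle_gf :
    TlblGF = expNegX + expNegY - 1 - BlblGF⁻¹ := by
  have hB : BlblGF * BlblGF⁻¹ = 1 := MvPowerSeries.mul_inv_cancel _ (by
    rw [← MvPowerSeries.coeff_zero_eq_constantCoeff_apply, MvPowerSeries.coeff_apply]
    simp [BlblGF])
  linear_combination BlblGF⁻¹ * tlblGF_mul_blblGF - (TlblGF - (expNegX + expNegY - 1)) * hB
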